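/- arXiv:1805.03794 — 6 statements merged into one kernel-verified Lean document; each statement's English description precedes it below -/
import Mathlib

section
/- The product-of-Poissonians distribution on voxel configurations is invariant under any single diffusion jump operator: for every species i, voxels v, v' and diffusion rate d_i, the sum over voxels and neighbors of d_i(n_{vi}+1)P(n + 1_{vi} - 1_{v'i}) - d_i n_{vi} P(n) equals zero, where P(n) = N_Γ ∏_{v,i} (ω c_i)^{n_{vi}}/n_{vi}! and the neighbor relation is symmetric. -/
/-!
Write `π(n) = ∏ₚ aₚ^{nₚ} / nₚ!` for the unnormalised product of Poisson weights. Moving one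
molecule from `q` to `p` with `aₚ = a_q` satisfies detailed balance,
`(nₚ + 1) π(n + eₚ - e_q) = n_q π(n)`, because `(k + 1) w(k + 1) = a w(k)` for a single Poisson
weight `w`. Hence the diffusion flux along the edge `v → v'` is `h v' - h v` with
`h v = ∑ᵢ dᵢ n_{vi} π(n)`, and summing such differences over a symmetric neighbour relation gives
zero.
-/

open Finset

/-- Junk value at `k < 0` (through `Int.toNat`); `poissonProduct` only evaluates it at `0 ≤ k`. -/
noncomputable def poissonWeight (a : ℝ) (k : ℤ) : ℝ :=
  a ^ k.toNat / (k.toNat.factorial : ℝ)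

theorem succ_mul_poissonWeight_succ (a : ℝ) {k : ℤ} (hk : 0 ≤ k) :
    ((k : ℝ) + 1) * poissonWeight a (k + 1) = a * poissonWeight a k := by
  lift k to ℕ using hk
  have hk1 : ((k : ℤ) + 1).toNat = k + 1 := by omega
  simp only [poissonWeight, hk1, Int.toNat_natCast, Nat.factorial_succ]
  push_cast
  field_simp
  ring

section PoissonProduct

variable {ι : Type*} [Fintype ι] [DecidableEq ι]

noncomputable def poissonProduct (a : ι → ℝ) (n : ι → ℤ) : ℝ :=
  if ∀ x, 0 ≤ n x then ∏ x, poissonWeight (a x) (n x) else 0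

theorem prod_eq_mul_mul_prod_compl_pair {M : Type*} [CommMonoid M] {p q : ι} (hpq : p ≠ q)
    (f : ι → M) : ∏ x, f x = f p * f q * ∏ x ∈ {p, q}ᶜ, f x := by
  rw [← prod_mul_prod_compl {p, q}, prod_pair hpq]

theorem poissonProduct_detailed_balance (a : ι → ℝ) {n : ι → ℤ} (hn : ∀ x, 0 ≤ n x) {p q : ι}
    (hpq : p ≠ q) (ha : a p = a q) :
    ((n p : ℝ) + 1) * poissonProduct a (n + Pi.single p 1 - Pi.single q 1) =
      n q * poissonProduct a n := by
  set m := n + Pi.single p 1 - Pi.single q 1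
  have hmp : m p = n p + 1 := by simp [m, hpq]
  have hmq : m q = n q - 1 := by simp [m, hpq.symm]
  rcases (hn q).eq_or_lt with hq0 | hq
  · have hm : ¬ ∀ x, 0 ≤ m x := fun h => by have := h q; omega
    simp [poissonProduct, hm, ← hq0]
  have hm : ∀ x, 0 ≤ m x := fun x => by
    rcases eq_or_ne x q with rfl | hxq
    · omega
    · have := hn x
      simp only [m, Pi.add_apply, Pi.sub_apply, Pi.single_apply, if_neg hxq]
      split_ifs <;> omega
  have hrest : ∀ x ∈ ({p, q}ᶜ : Finset ι), m x = n x := fun x hx => by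
    simp only [mem_compl, mem_insert, mem_singleton, not_or] at hx
    simp [m, hx.1, hx.2]
  have hp_step := succ_mul_poissonWeight_succ (a p) (hn p)
  have hq_step := succ_mul_poissonWeight_succ (a q) (show 0 ≤ n q - 1 by omega)
  rw [sub_add_cancel, Int.cast_sub, Int.cast_one, sub_add_cancel] at hq_step
  rw [poissonProduct, poissonProduct, if_pos hm, if_pos hn, prod_eq_mul_mul_prod_compl_pair hpq,
    prod_eq_mul_mul_prod_compl_pair hpq, prod_congr rfl fun x hx => by rw [hrest x hx], hmp, hmq]
  rw [ha] at hp_step ⊢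
  set R := ∏ x ∈ {p, q}ᶜ, poissonWeight (a x) (n x)
  linear_combination (poissonWeight (a q) (n q - 1) * R) * hp_step
    - (poissonWeight (a q) (n p) * R) * hq_step

end PoissonProduct

theorem sum_sum_sub_eq_zero_of_symm {V M : Type*} [Fintype V] [AddCommGroup M]
    (Ne : V → Finset V) (hsym : ∀ v v', v' ∈ Ne v ↔ v ∈ Ne v') (h : V → M) :
    ∑ v, ∑ v' ∈ Ne v, (h v' - h v) = 0 := by
  have hswap : ∑ v, ∑ v' ∈ Ne v, h v' = ∑ v', ∑ v ∈ Ne v', h v' :=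
    sum_comm' fun v v' => by simp [hsym v v']
  simp only [sum_sub_distrib, hswap, sub_self]

theorem uncurry_add_single_sub_single {α β : Type*} [DecidableEq α] [DecidableEq β]
    (n : α → β → ℤ) (v v' : α) (i : β) :
    Function.uncurry (fun w j => n w j + (if w = v ∧ j = i then 1 else 0)
        - (if w = v' ∧ j = i then 1 else 0)) =
      Function.uncurry n + Pi.single (v, i) 1 - Pi.single (v', i) 1 := by
  ext ⟨w, j⟩
  simp [Pi.single_apply, Prod.ext_iff]

open Classical in
theorem poisson_product_diffusion_invariant_general (V : Type) [Fintype V] [DecidableEq V]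
    (N : ℕ) (Ne : V → Finset V)
    (hsym : ∀ v v', v' ∈ Ne v ↔ v ∈ Ne v') (hirr : ∀ v, v ∉ Ne v)
    (ω NΓ : ℝ) (c : Fin N → ℝ)
    (d : Fin N → ℝ)
    (P : (V → Fin N → ℤ) → ℝ)
    (hP : ∀ n : V → Fin N → ℤ, P n =
      if ∀ v i, 0 ≤ n v i then
        NΓ * ∏ v, ∏ i, (ω * c i) ^ (n v i).toNat / (Nat.factorial (n v i).toNat : ℝ)
      else 0)
    (n : V → Fin N → ℤ) (hn : ∀ v i, 0 ≤ n v i) :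
    ∑ v, ∑ v' ∈ Ne v, ∑ i,
      d i * ((((n v i : ℤ) : ℝ) + 1) *
          P (fun w j => n w j + (if w = v ∧ j = i then 1 else 0)
              - (if w = v' ∧ j = i then 1 else 0))
        - ((n v i : ℤ) : ℝ) * P n) = 0 := by
  set a : V × Fin N → ℝ := fun x => ω * c x.2
  have hP_eq : ∀ m, P m = NΓ * poissonProduct a (Function.uncurry m) := by
    intro m
    rw [hP, poissonProduct]
    simp only [a, Prod.forall, Function.uncurry_apply_pair, Fintype.prod_prod_type, poissonWeight]
    split_ifs <;> simp
  have hbalance : ∀ v v', v ≠ v' → ∀ i, ((n v i : ℝ) + 1) *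
      P (fun w j => n w j + (if w = v ∧ j = i then 1 else 0)
        - (if w = v' ∧ j = i then 1 else 0)) = n v' i * P n := by
    intro v v' hvv' i
    have htransfer := poissonProduct_detailed_balance a (n := Function.uncurry n)
      (fun x => hn x.1 x.2) (p := (v, i)) (q := (v', i)) (by simpa using hvv') rfl
    rw [Function.uncurry_apply_pair, Function.uncurry_apply_pair] at htransfer
    rw [hP_eq, hP_eq, uncurry_add_single_sub_single]
    linear_combination NΓ * htransfer
  have hflux : ∀ v, ∀ v' ∈ Ne v, ∑ i, d i * ((((n v i : ℤ) : ℝ) + 1) *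
        P (fun w j => n w j + (if w = v ∧ j = i then 1 else 0)
            - (if w = v' ∧ j = i then 1 else 0)) - ((n v i : ℤ) : ℝ) * P n)
      = ∑ i, d i * (n v' i * P n) - ∑ i, d i * (n v i * P n) := by
    intro v v' hv'
    have hvv' : v ≠ v' := fun h => hirr v (h ▸ hv')
    simp only [hbalance v v' hvv', ← sum_sub_distrib, mul_sub]
  rw [sum_congr rfl fun v _ => sum_congr rfl (hflux v)]
  exact sum_sum_sub_eq_zero_of_symm Ne hsym fun v => ∑ i, d i * (n v i * P n)

open Classical in
/-- The product-of-Poissonians distribution (with voxel-independent rates `ω c_i`)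
is invariant under the diffusion part of the RDME: the sum over voxels, neighbors
and species of `d_i ((n_{vi}+1) P(n + 1_{vi} - 1_{v'i}) - n_{vi} P(n))` vanishes,
for any symmetric (and irreflexive) neighbor relation and any rates `d_i ≥ 0`. -/
theorem poisson_product_diffusion_invariant (V : Type) [Fintype V] [DecidableEq V]
    (N : ℕ) (Ne : V → Finset V)
    (hsym : ∀ v v', v' ∈ Ne v ↔ v ∈ Ne v') (hirr : ∀ v, v ∉ Ne v)
    (ω NΓ : ℝ) (hω : 0 < ω) (c : Fin N → ℝ) (hc : ∀ i, 0 < c i)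
    (d : Fin N → ℝ) (hd : ∀ i, 0 ≤ d i)
    (P : (V → Fin N → ℤ) → ℝ)
    (hP : ∀ n : V → Fin N → ℤ, P n =
      if ∀ v i, 0 ≤ n v i then
        NΓ * ∏ v, ∏ i, (ω * c i) ^ (n v i).toNat / (Nat.factorial (n v i).toNat : ℝ)
      else 0)
    (n : V → Fin N → ℤ) (hn : ∀ v i, 0 ≤ n v i) :
    ∑ v, ∑ v' ∈ Ne v, ∑ i,
      d i * ((((n v i : ℤ) : ℝ) + 1) *
          P (fun w j => n w j + (if w = v ∧ j = i then 1 else 0)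
              - (if w = v' ∧ j = i then 1 else 0))
        - ((n v i : ℤ) : ℝ) * P n) = 0 :=
  poisson_product_diffusion_invariant_general V N Ne hsym hirr ω NΓ c d P hP n hn
end

section
/- If a reaction network is linear (every reaction has at most one reactant molecule, i.e., ∑_i s_{ij} ≤ 1 for all j), then the marginal distribution P(n̂,t) = ∑_{n: ∑_v n_v = n̂} P(n,t) of total molecule numbers under the reaction-diffusion master equation satisfies exactly the nonspatial chemical master equation ∂_t P(n̂,t) = ∑_j [f_j(n̂ - V_j, Ω)P(n̂ - V_j,t) - f_j(n̂, Ω)P(n̂,t)] with total volume Ω = |V|ω, independently of all diffusion rates d_i. -/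
/-!
Sum the RDME over the finitely many configurations `n` with a fixed total `m`. A diffusion jump
`v → v'` keeps the total, and `n ↦ n + e_v - e_v'` is a bijection between the parts of this fibre
where the gain and the loss terms live, so the two cancel for every jump separately. A reaction at
voxel `v` with net change `ν` maps the fibre over `m - ν` into the fibre over `m` in the same way, so
its gain term becomes `∑_v f_v` summed over the fibre over `m - ν`. Linearity is exactly what makes
`∑_v f_v(n)` depend on `n` only through its total: it is `k |V| ω` for a zeroth-order reaction and
`k m_i` for a reaction consuming one molecule of species `i`.
-/

open Finset

section LinearPropensity

variable {V ι : Type*} [Fintype V] [Fintype ι]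

theorem exists_eq_pi_single_of_sum_eq_one [DecidableEq ι] {s : ι → ℕ} (hs : ∑ i, s i = 1) :
    ∃ i₀, s = Pi.single i₀ 1 := by
  obtain ⟨i₀, hi₀⟩ := (Finsupp.sum_eq_one_iff (Finsupp.equivFunOnFinite.symm s)).1
    (by simpa [Finsupp.sum_fintype] using hs)
  exact ⟨i₀, by simpa using congrArg Finsupp.equivFunOnFinite hi₀⟩

theorem sum_zpow_mul_prod_descFactorial {s : ι → ℕ} (hs : ∑ i, s i ≤ 1) (ω : ℝ)
    (x : V → ι → ℕ) :
    ∑ v, ω ^ (1 - ∑ i, (s i : ℤ)) * ∏ i, ((x v i).descFactorial (s i) : ℝ)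
      = (Fintype.card V * ω) ^ (1 - ∑ i, (s i : ℤ)) *
          ∏ i, ((∑ v, x v i).descFactorial (s i) : ℝ) := by
  classical
  rcases Nat.le_one_iff_eq_zero_or_eq_one.1 hs with hs | hs
  · simp [sum_eq_zero_iff.1 hs]
  · obtain ⟨i₀, rfl⟩ := exists_eq_pi_single_of_sum_eq_one hs
    simp [Pi.single_apply, apply_ite (Nat.descFactorial _)]

end LinearPropensity

theorem Int.toNat_sum_of_nonneg {α : Type*} {s : Finset α} {g : α → ℤ}
    (hg : ∀ a ∈ s, 0 ≤ g a) : (∑ a ∈ s, g a).toNat = ∑ a ∈ s, (g a).toNat := by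
  apply Nat.cast_injective (R := ℤ)
  push_cast [Int.toNat_of_nonneg (sum_nonneg hg)]
  exact sum_congr rfl fun a ha => (Int.toNat_of_nonneg (hg a ha)).symm

section Configurations

variable {V ι : Type*} [Fintype V] [DecidableEq V] [Fintype ι] [DecidableEq ι]

-- The upper bound `n ≤ m` follows from the other two conditions; it only makes the set finite.
variable (V) in
noncomputable def configsWithTotal (m : ι → ℤ) : Finset (V → ι → ℤ) :=
  (Icc 0 fun _ => m).filter fun n => ∑ v, n v = m

theorem mem_configsWithTotal {m : ι → ℤ} {n : V → ι → ℤ} :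
    n ∈ configsWithTotal V m ↔ 0 ≤ n ∧ ∑ v, n v = m := by
  simp only [configsWithTotal, mem_filter, mem_Icc]
  refine ⟨fun h => ⟨h.1.1, h.2⟩, fun ⟨hn, hsum⟩ => ⟨⟨hn, fun v => ?_⟩, hsum⟩⟩
  exact hsum ▸ single_le_sum (fun w _ => hn w) (mem_univ v)

theorem tsum_subtype_nat_eq_sum_configsWithTotal {M : Type*} [AddCommMonoid M] [TopologicalSpace M]
    (m : ι → ℤ) (g : (V → ι → ℤ) → M) :
    ∑' n : {n : V → ι → ℕ // ∀ i, ∑ v, (n v i : ℤ) = m i}, g (fun v i => (n.1 v i : ℤ)) =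
      ∑ n ∈ configsWithTotal V m, g n := by
  let e : {n : V → ι → ℕ // ∀ i, ∑ v, (n v i : ℤ) = m i} ≃ configsWithTotal V m :=
    { toFun := fun n => ⟨fun v i => n.1 v i, mem_configsWithTotal.2
        ⟨fun v i => Int.natCast_nonneg _, funext fun i => by simpa using n.2 i⟩⟩
      invFun := fun n => ⟨fun v i => (n.1 v i).toNat, fun i => by
        obtain ⟨hn, hsum⟩ := mem_configsWithTotal.1 n.2
        simp [Int.toNat_of_nonneg (hn _ i), ← hsum]⟩
      left_inv := fun n => by ext; simp
      right_inv := fun n => by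
        ext v i
        simp [Int.toNat_of_nonneg ((mem_configsWithTotal.1 n.2).1 v i)] }
  rw [← Finset.tsum_subtype]
  exact e.tsum_eq (fun n => g n.1)

theorem sum_configsWithTotal_comp_sub {M : Type*} [AddCommMonoid M] (g : (V → ι → ℤ) → M)
    (δ : V → ι → ℤ) (m : ι → ℤ) (hg : ∀ n, g n ≠ 0 → 0 ≤ n ∧ 0 ≤ n + δ) :
    ∑ n ∈ configsWithTotal V m, g (n - δ) = ∑ n ∈ configsWithTotal V (m - ∑ v, δ v), g n := by
  refine sum_bij_ne_zero (fun n _ _ => n - δ) (fun n hn hgn => ?_)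
    (fun _ _ _ _ _ _ h => sub_left_injective h) (fun n hn hgn => ?_) fun _ _ _ => rfl
  · obtain ⟨-, hsum⟩ := mem_configsWithTotal.1 hn
    exact mem_configsWithTotal.2 ⟨(hg _ hgn).1, by simp only [Pi.sub_apply, sum_sub_distrib, hsum]⟩
  · obtain ⟨-, hsum⟩ := mem_configsWithTotal.1 hn
    refine ⟨n + δ, mem_configsWithTotal.2 ⟨(hg n hgn).2, ?_⟩, by simpa using hgn, by simp⟩
    simp only [Pi.add_apply, sum_add_distrib, hsum, sub_add_cancel]

theorem sum_configsWithTotal_comp_sub_single {M : Type*} [AddCommMonoid M]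
    (g : (V → ι → ℤ) → M) (v : V) (ν : ι → ℤ) (m : ι → ℤ)
    (hg : ∀ n, g n ≠ 0 → 0 ≤ n ∧ 0 ≤ n v + ν) :
    ∑ n ∈ configsWithTotal V m, g (fun w i => n w i - (if w = v then ν i else 0))
      = ∑ n ∈ configsWithTotal V (fun i => m i - ν i), g n := by
  have hsub (n : V → ι → ℤ) :
      (fun w i => n w i - (if w = v then ν i else 0)) = n - Pi.single v ν := by
    ext w i
    by_cases hw : w = v <;> simp [hw]
  simp_rw [hsub]
  rw [sum_configsWithTotal_comp_sub g, sum_pi_single', if_pos (mem_univ v)]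
  · rfl
  intro n hn
  refine ⟨(hg n hn).1, fun w => ?_⟩
  by_cases hw : w = v
  · subst hw
    simpa using (hg n hn).2
  · simpa [hw] using (hg n hn).1 w

theorem sum_configsWithTotal_jump_eq (p : (V → ι → ℤ) → ℝ) (hp : ∀ n, ¬ 0 ≤ n → p n = 0)
    {v v' : V} (hvv' : v ≠ v') (i : ι) (m : ι → ℤ) :
    ∑ n ∈ configsWithTotal V m, ((n v i : ℝ) + 1) *
        p (fun w j => n w j + (if w = v ∧ j = i then 1 else 0) - (if w = v' ∧ j = i then 1 else 0))
      = ∑ n ∈ configsWithTotal V m, (n v i : ℝ) * p n := by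
  set δ : V → ι → ℤ := fun w j => (if w = v' ∧ j = i then 1 else 0) - (if w = v ∧ j = i then 1 else 0)
  have hδ : ∑ w, δ w = 0 := by
    ext j
    by_cases hj : j = i <;> simp [δ, hj, sum_sub_distrib]
  have hδvi : δ v i = -1 := by simp [δ, hvv']
  have hjump (n : V → ι → ℤ) : ((n v i : ℝ) + 1) *
      p (fun w j => n w j + (if w = v ∧ j = i then 1 else 0) - (if w = v' ∧ j = i then 1 else 0))
        = ((n - δ) v i : ℝ) * p (n - δ) := by
    have hvi : (n - δ) v i = n v i + 1 := by rw [Pi.sub_apply, Pi.sub_apply, hδvi, sub_neg_eq_add]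
    rw [hvi]
    push_cast
    congr 2
    ext w j
    simp only [δ, Pi.sub_apply]
    ring
  simp_rw [hjump]
  rw [sum_configsWithTotal_comp_sub (fun n => (n v i : ℝ) * p n) δ m, hδ, sub_zero]
  intro n hn
  have hn0 : 0 ≤ n := by_contra fun h => hn (by rw [hp n h, mul_zero])
  have hvi : 1 ≤ n v i := by
    have : n v i ≠ 0 := fun h => hn (by simp [h])
    have : 0 ≤ n v i := hn0 v i
    omega
  refine ⟨hn0, fun w j => ?_⟩
  have : 0 ≤ n w j := hn0 w j
  by_cases hw : w = v ∧ j = i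
  · obtain ⟨rfl, rfl⟩ := hw
    show 0 ≤ n w j + δ w j
    omega
  · simp only [δ, Pi.add_apply, Pi.zero_apply, if_neg hw]
    split_ifs <;> omega

theorem sum_configsWithTotal_diffusion_eq_zero (Ne : V → Finset V) (hirr : ∀ v, v ∉ Ne v)
    (d : ι → ℝ) (p : (V → ι → ℤ) → ℝ) (hp : ∀ n, ¬ 0 ≤ n → p n = 0) (m : ι → ℤ) :
    ∑ n ∈ configsWithTotal V m, ∑ v, ∑ v' ∈ Ne v, ∑ i, d i * (((n v i : ℝ) + 1) *
        p (fun w j => n w j + (if w = v ∧ j = i then 1 else 0) - (if w = v' ∧ j = i then 1 else 0))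
        - (n v i : ℝ) * p n) = 0 := by
  rw [sum_comm]
  refine sum_eq_zero fun v _ => ?_
  rw [sum_comm]
  refine sum_eq_zero fun v' hv' => ?_
  rw [sum_comm]
  refine sum_eq_zero fun i _ => ?_
  have hvv' : v ≠ v' := fun h => hirr v (h ▸ hv')
  rw [← mul_sum, sum_sub_distrib, sum_configsWithTotal_jump_eq p hp hvv', sub_self, mul_zero]

theorem sum_configsWithTotal_reaction {κ : Type*} [Fintype κ]
    (a : V → κ → (V → ι → ℤ) → ℝ) (A : κ → (ι → ℤ) → ℝ) (δ : κ → ι → ℤ)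
    (p : (V → ι → ℤ) → ℝ) (hp : ∀ n, ¬ 0 ≤ n → p n = 0)
    (hA : ∀ j m, ∀ n ∈ configsWithTotal V m, ∑ v, a v j n = A j m)
    (hpos : ∀ v j n, a v j n ≠ 0 → ∀ i, 0 ≤ n v i + δ j i) (m : ι → ℤ) :
    ∑ n ∈ configsWithTotal V m, ∑ v, ∑ j,
        (a v j (fun w i => n w i - (if w = v then δ j i else 0)) *
            p (fun w i => n w i - (if w = v then δ j i else 0)) - a v j n * p n)
      = ∑ j, (A j (fun i => m i - δ j i) * ∑ n ∈ configsWithTotal V (fun i => m i - δ j i), p n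
          - A j m * ∑ n ∈ configsWithTotal V m, p n) := by
  have loss (j : κ) (m' : ι → ℤ) : ∑ n ∈ configsWithTotal V m', ∑ v, a v j n * p n
      = A j m' * ∑ n ∈ configsWithTotal V m', p n := by
    rw [mul_sum]
    exact sum_congr rfl fun n hn => by rw [← sum_mul, hA j m' n hn]
  have gain (j : κ) (v : V) : ∑ n ∈ configsWithTotal V m,
      a v j (fun w i => n w i - (if w = v then δ j i else 0)) *
        p (fun w i => n w i - (if w = v then δ j i else 0))
      = ∑ n ∈ configsWithTotal V (fun i => m i - δ j i), a v j n * p n :=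
    sum_configsWithTotal_comp_sub_single (fun n => a v j n * p n) v (δ j) m fun n hn =>
      ⟨by_contra fun h => hn (by rw [hp n h, mul_zero]), hpos v j n (left_ne_zero_of_mul hn)⟩
  simp only [sum_sub_distrib]
  congr 1
  · rw [sum_comm, sum_congr rfl fun v _ => sum_comm, sum_comm]
    refine sum_congr rfl fun j _ => ?_
    simp only [gain j]
    rw [sum_comm, loss]
  · rw [sum_congr rfl fun n _ => sum_comm, sum_comm]
    exact sum_congr rfl fun j _ => loss j m

end Configurations

open Classical in
theorem linear_network_rdme_reduces_to_cme_general (V : Type) [Fintype V] [DecidableEq V]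
    (N K : ℕ) (Ne : V → Finset V)
    (hirr : ∀ v, v ∉ Ne v)
    (s r : Fin K → Fin N → ℕ) (k : Fin K → ℝ)
    (ω : ℝ) (d : Fin N → ℝ)
    -- linearity: every reaction has at most one reactant molecule
    (hlin : ∀ j, ∑ i, s j i ≤ 1)
    -- per-voxel mass-action propensity:
    (f : V → Fin K → (V → Fin N → ℤ) → ℝ)
    (hf : ∀ v j n, f v j n =
      if ∀ w i, 0 ≤ n w i then
        k j * ω ^ ((1 : ℤ) - ∑ i, (s j i : ℤ)) *
          ∏ i, (Nat.descFactorial (n v i).toNat (s j i) : ℝ)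
      else 0)
    -- nonspatial mass-action propensity with total volume Ω = |V| ω:
    (F : Fin K → (Fin N → ℤ) → ℝ)
    (hF : ∀ j m, F j m =
      if ∀ i, 0 ≤ m i then
        k j * ((Fintype.card V : ℝ) * ω) ^ ((1 : ℤ) - ∑ i, (s j i : ℤ)) *
          ∏ i, (Nat.descFactorial (m i).toNat (s j i) : ℝ)
      else 0)
    -- P(·,t): time-dependent distribution on configurations, vanishing off ℕ-states
    (P : ℝ → (V → Fin N → ℤ) → ℝ)
    (hP0 : ∀ t n, (¬ ∀ v i, 0 ≤ n v i) → P t n = 0)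
    -- P satisfies the RDME:
    (hRDME : ∀ t (n : V → Fin N → ℤ),
      HasDerivAt (fun τ => P τ n)
        ((∑ v, ∑ v' ∈ Ne v, ∑ i,
            d i * ((((n v i : ℤ) : ℝ) + 1) *
                P t (fun w j => n w j + (if w = v ∧ j = i then 1 else 0)
                    - (if w = v' ∧ j = i then 1 else 0))
              - ((n v i : ℤ) : ℝ) * P t n))
         + (∑ v, ∑ j,
            (f v j (fun w i => n w i - (if w = v then (r j i : ℤ) - (s j i : ℤ) else 0)) *
               P t (fun w i => n w i - (if w = v then (r j i : ℤ) - (s j i : ℤ) else 0))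
             - f v j n * P t n))) t)
    -- the marginal over total molecule numbers:
    (Phat : ℝ → (Fin N → ℤ) → ℝ)
    (hPhat : ∀ t (m : Fin N → ℤ), Phat t m =
      ∑' n : {n : V → Fin N → ℕ // ∀ i, (∑ v, (n v i : ℤ)) = m i},
        P t (fun v i => (n.1 v i : ℤ))) :
    -- conclusion: the marginal satisfies the nonspatial CME with volume Ω
    ∀ t (nhat : Fin N → ℤ),
      HasDerivAt (fun τ => Phat τ nhat)
        (∑ j, (F j (fun i => nhat i - ((r j i : ℤ) - (s j i : ℤ))) *
                 Phat t (fun i => nhat i - ((r j i : ℤ) - (s j i : ℤ)))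
               - F j nhat * Phat t nhat)) t := by
  intro t nhat
  have hPhat' (τ : ℝ) (m : Fin N → ℤ) : Phat τ m = ∑ n ∈ configsWithTotal V m, P τ n :=
    (hPhat τ m).trans (tsum_subtype_nat_eq_sum_configsWithTotal m (P τ))
  have hfF (j : Fin K) (m : Fin N → ℤ) (n) (hn : n ∈ configsWithTotal V m) :
      ∑ v, f v j n = F j m := by
    obtain ⟨hn0, hsum⟩ := mem_configsWithTotal.1 hn
    have hm0 : 0 ≤ m := hsum ▸ sum_nonneg fun v _ => hn0 v
    have hn0' : ∀ w i, 0 ≤ n w i := hn0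
    have hm0' : ∀ i, 0 ≤ m i := hm0
    simp only [hf, hF, hn0', hm0', implies_true, if_true, mul_assoc]
    rw [← mul_sum, sum_zpow_mul_prod_descFactorial (hlin j), ← hsum]
    simp only [Finset.sum_apply, Int.toNat_sum_of_nonneg fun v _ => hn0 v _]
  have hpos (v j n) (hn : f v j n ≠ 0) (i : Fin N) : 0 ≤ n v i + ((r j i : ℤ) - s j i) := by
    rw [hf] at hn
    split_ifs at hn with hn0
    · have : s j i ≤ (n v i).toNat := not_lt.1 fun hlt => hn <| by
        rw [prod_eq_zero (mem_univ i) (by simp [Nat.descFactorial_eq_zero_iff_lt.2 hlt]), mul_zero]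
      have := hn0 v i
      omega
    · exact absurd rfl hn
  simp only [hPhat']
  refine (HasDerivAt.fun_sum fun n _ => hRDME t n).congr_deriv ?_
  rw [sum_add_distrib, sum_configsWithTotal_diffusion_eq_zero Ne hirr d (P t) (hP0 t), zero_add,
    sum_configsWithTotal_reaction f F _ (P t) (hP0 t) hfF hpos]

open Classical in
/-- For a linear reaction network (`∑_i s_{ij} ≤ 1` for every reaction `j`), the
marginal distribution of total molecule numbers under the reaction-diffusion
master equation satisfies exactly the nonspatial chemical master equation with
total volume `Ω = |V| ω`, independently of all diffusion rates `d_i`. -/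
theorem linear_network_rdme_reduces_to_cme (V : Type) [Fintype V] [DecidableEq V]
    (N K : ℕ) (Ne : V → Finset V)
    (hsym : ∀ v v', v' ∈ Ne v ↔ v ∈ Ne v') (hirr : ∀ v, v ∉ Ne v)
    (s r : Fin K → Fin N → ℕ) (k : Fin K → ℝ) (hk : ∀ j, 0 < k j)
    (ω : ℝ) (hω : 0 < ω) (d : Fin N → ℝ) (hd : ∀ i, 0 ≤ d i)
    -- linearity: every reaction has at most one reactant molecule
    (hlin : ∀ j, ∑ i, s j i ≤ 1)
    -- per-voxel mass-action propensity:
    (f : V → Fin K → (V → Fin N → ℤ) → ℝ)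
    (hf : ∀ v j n, f v j n =
      if ∀ w i, 0 ≤ n w i then
        k j * ω ^ ((1 : ℤ) - ∑ i, (s j i : ℤ)) *
          ∏ i, (Nat.descFactorial (n v i).toNat (s j i) : ℝ)
      else 0)
    -- nonspatial mass-action propensity with total volume Ω = |V| ω:
    (F : Fin K → (Fin N → ℤ) → ℝ)
    (hF : ∀ j m, F j m =
      if ∀ i, 0 ≤ m i then
        k j * ((Fintype.card V : ℝ) * ω) ^ ((1 : ℤ) - ∑ i, (s j i : ℤ)) *
          ∏ i, (Nat.descFactorial (m i).toNat (s j i) : ℝ)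
      else 0)
    -- P(·,t): time-dependent distribution on configurations, vanishing off ℕ-states
    (P : ℝ → (V → Fin N → ℤ) → ℝ)
    (hP0 : ∀ t n, (¬ ∀ v i, 0 ≤ n v i) → P t n = 0)
    -- P satisfies the RDME:
    (hRDME : ∀ t (n : V → Fin N → ℤ),
      HasDerivAt (fun τ => P τ n)
        ((∑ v, ∑ v' ∈ Ne v, ∑ i,
            d i * ((((n v i : ℤ) : ℝ) + 1) *
                P t (fun w j => n w j + (if w = v ∧ j = i then 1 else 0)
                    - (if w = v' ∧ j = i then 1 else 0))
              - ((n v i : ℤ) : ℝ) * P t n))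
         + (∑ v, ∑ j,
            (f v j (fun w i => n w i - (if w = v then (r j i : ℤ) - (s j i : ℤ) else 0)) *
               P t (fun w i => n w i - (if w = v then (r j i : ℤ) - (s j i : ℤ) else 0))
             - f v j n * P t n))) t)
    -- the marginal over total molecule numbers:
    (Phat : ℝ → (Fin N → ℤ) → ℝ)
    (hPhat : ∀ t (m : Fin N → ℤ), Phat t m =
      ∑' n : {n : V → Fin N → ℕ // ∀ i, (∑ v, (n v i : ℤ)) = m i},
        P t (fun v i => (n.1 v i : ℤ))) :
    -- conclusion: the marginal satisfies the nonspatial CME with volume Ω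
    ∀ t (nhat : Fin N → ℤ),
      HasDerivAt (fun τ => Phat τ nhat)
        (∑ j, (F j (fun i => nhat i - ((r j i : ℤ) - (s j i : ℤ))) *
                 Phat t (fun i => nhat i - ((r j i : ℤ) - (s j i : ℤ)))
               - F j nhat * Phat t nhat)) t :=
  linear_network_rdme_reduces_to_cme_general V N K Ne hirr s r k ω d hlin f hf F hF P hP0 hRDME Phat
    hPhat
end

section
/- For a linear reaction R_j with a single reactant species i (propensity k_j n_{vi} in voxel v), summing the per-voxel reaction terms of the RDME over all configurations n with totals n̂ gives k_j(n̂_i - V_{ij})P(n̂ - V_j, t) - k_j n̂_i P(n̂, t), i.e., ∑_{n∈S(n̂)} ∑_{v∈V} [k_j(n_{vi} - V_{ij})P(n - Ṽ_{vj},t) - k_j n_{vi}P(n,t)] = k_j(n̂_i - V_{ij})P(n̂-V_j,t) - k_j n̂_i P(n̂,t), where P(n̂,t) = ∑_{n∈S(n̂)} P(n,t). -/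
/-!
Work with integer-valued configurations, so that `n - Ṽ_{vj}` is again a configuration.
For a fixed voxel `v`, the translation `n ↦ n - Ṽ_{vj}` carries `S(n̂)` onto `S(n̂ - V_j)`
except on configurations where the shifted gain term `k m_{vi} P(m)` vanishes anyway: either
`m` has a negative entry, so `P(m) = 0`, or `m_{vi} = 0`, the only way `m + Ṽ_{vj}` can be
negative since the reaction consumes a single molecule of species `i`. After the translation,
summing `k m_{vi} P(m)` over the voxels replaces `∑_v m_{vi}` by the total `n̂_i - V_{ij}`;
the loss term is the same computation without translation.
-/

open Finset

namespace RDME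

variable {V ι : Type*}

lemma add_single_nonneg [DecidableEq V] [DecidableEq ι] {d : ι → ℤ} {i₀ : ι}
    (hd : ∀ i, (if i = i₀ then -1 else 0) ≤ d i) {y : V → ι → ℤ} (hy : 0 ≤ y) {v : V}
    (hyv : y v i₀ ≠ 0) : 0 ≤ y + Pi.single v d := by
  intro w i
  change 0 ≤ y w i + (Pi.single v d : V → ι → ℤ) w i
  have hywi : 0 ≤ y w i := hy w i
  rcases eq_or_ne w v with rfl | hw
  · have hdi := hd i
    rw [Pi.single_eq_same]
    split_ifs at hdi with hi
    · subst hi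
      omega
    · omega
  · simpa [Pi.single_eq_of_ne hw] using hywi

variable [Fintype V]

/-- `S(m)`, embedded in the integer-valued configurations. -/
def fiber (m : ι → ℤ) : Set (V → ι → ℤ) := {x | 0 ≤ x ∧ ∑ v, x v = m}

lemma le_of_mem_fiber {m : ι → ℤ} {x : V → ι → ℤ} (hx : x ∈ fiber m) (v : V) (i : ι) :
    x v i ≤ m i := by
  rw [← hx.2, Finset.sum_apply]
  exact single_le_sum (fun w _ => hx.1 w i) (mem_univ v)

lemma fiber_finite [Finite ι] (m : ι → ℤ) : (fiber m : Set (V → ι → ℤ)).Finite :=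
  (Set.Finite.pi fun _ => Set.Finite.pi fun i => Set.finite_Icc 0 (m i)).subset
    fun _ hx => Set.mem_univ_pi.2 fun v => Set.mem_univ_pi.2 fun i =>
      ⟨hx.1 v i, le_of_mem_fiber hx v i⟩

instance [Finite ι] (m : ι → ℤ) : Finite (fiber m : Set (V → ι → ℤ)) :=
  (fiber_finite m).to_subtype

def natFiberEquiv (m : ι → ℤ) :
    {n : V → ι → ℕ // ∀ i, ∑ v, (n v i : ℤ) = m i} ≃ (fiber m : Set (V → ι → ℤ)) where
  toFun n := ⟨fun v i => n.1 v i, fun v i => Int.natCast_nonneg _, funext fun i => by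
    simpa [Finset.sum_apply] using n.2 i⟩
  invFun x := ⟨fun v i => (x.1 v i).toNat, fun i => by
    simpa [Int.toNat_of_nonneg (x.2.1 _ i), Finset.sum_apply] using congrFun x.2.2 i⟩
  left_inv n := by ext; simp
  right_inv x := by ext; simp [Int.toNat_of_nonneg (x.2.1 _ _)]

lemma tsum_natFiber (m : ι → ℤ) (f : (V → ι → ℤ) → ℝ) :
    ∑' n : {n : V → ι → ℕ // ∀ i, ∑ v, (n v i : ℤ) = m i}, f (fun v i => n.1 v i) =
      ∑' x : fiber m, f x.1 :=
  (natFiberEquiv m).tsum_eq fun x => f x.1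

lemma tsum_natFiber_natCast (c : ι → ℕ) (f : (V → ι → ℤ) → ℝ) :
    ∑' n : {n : V → ι → ℕ // ∀ i, ∑ v, n v i = c i}, f (fun v i => n.1 v i) =
      ∑' x : fiber (fun i => (c i : ℤ)), f x.1 := by
  rw [← tsum_natFiber]
  exact (Equiv.subtypeEquivRight fun n => by simp only [← Nat.cast_sum, Nat.cast_inj]).tsum_eq
    (fun n : {n : V → ι → ℕ // ∀ i, ∑ v, (n v i : ℤ) = c i} => f fun v i => n.1 v i)

lemma tsum_fiber_comp_sub {a : V → ι → ℤ} {f : (V → ι → ℤ) → ℝ}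
    (hf : ∀ y, f y ≠ 0 → 0 ≤ y ∧ 0 ≤ y + a) (m : ι → ℤ) :
    ∑' x : fiber m, f (x.1 - a) = ∑' y : fiber (m - ∑ v, a v), f y.1 := by
  classical
  rw [_root_.tsum_subtype (fiber m) (fun x => f (x - a)), _root_.tsum_subtype,
    ← (Equiv.addRight a).tsum_eq]
  refine tsum_congr fun y => ?_
  rw [Equiv.coe_addRight, Set.indicator_apply, Set.indicator_apply, add_sub_cancel_right]
  by_cases h : f y = 0
  · simp only [h, ite_self]
  · obtain ⟨hy, hya⟩ := hf y h
    have hmem : y + a ∈ fiber m ↔ y ∈ fiber (m - ∑ v, a v) := by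
      simp [fiber, hy, hya, sum_add_distrib, eq_sub_iff_add_eq]
    simp only [hmem]

lemma sum_tsum_fiber_mul_coord [Finite ι] (m : ι → ℤ) (i : ι) (c : ℝ)
    (g : (V → ι → ℤ) → ℝ) :
    ∑ v, ∑' x : fiber m, c * (x.1 v i : ℝ) * g x.1 = c * m i * ∑' x : fiber m, g x.1 := by
  rw [← Summable.tsum_finsetSum fun _ _ => .of_finite, ← tsum_mul_left]
  refine tsum_congr fun x => ?_
  rw [← Finset.sum_mul, ← mul_sum, ← Int.cast_sum, ← Finset.sum_apply, x.2.2]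

end RDME

open RDME

open Classical in
theorem unary_reaction_marginal_general (V : Type) [Fintype V] [DecidableEq V]
    (N : ℕ) (i0 : Fin N) (r : Fin N → ℕ) (k : ℝ)
    (Vj : Fin N → ℤ) (hVj : ∀ i, Vj i = (r i : ℤ) - (if i = i0 then 1 else 0))
    (P : (V → Fin N → ℤ) → ℝ)
    (hP0 : ∀ n, (¬ ∀ v i, 0 ≤ n v i) → P n = 0)
    (Phat : (Fin N → ℤ) → ℝ)
    (hPhat : ∀ m : Fin N → ℤ, Phat m =
      ∑' n : {n : V → Fin N → ℕ // ∀ i, (∑ v, (n v i : ℤ)) = m i},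
        P (fun v i => (n.1 v i : ℤ)))
    (nhat : Fin N → ℕ) :
    ∑' n : {n : V → Fin N → ℕ // ∀ i, ∑ v, n v i = nhat i},
      ∑ v,
        (k * (((n.1 v i0 : ℤ) - Vj i0 : ℤ) : ℝ) *
            P (fun w i => (n.1 w i : ℤ) - (if w = v then Vj i else 0))
         - k * ((n.1 v i0 : ℕ) : ℝ) * P (fun w i => (n.1 w i : ℤ)))
      = k * ((((nhat i0 : ℤ) - Vj i0 : ℤ) : ℝ)) *
          Phat (fun i => (nhat i : ℤ) - Vj i)
        - k * ((nhat i0 : ℕ) : ℝ) * Phat (fun i => (nhat i : ℤ)) := by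
  have hVj_ge : ∀ i, (if i = i0 then -1 else 0) ≤ Vj i := fun i => by
    rw [hVj i]; split_ifs <;> omega
  let G : V → (V → Fin N → ℤ) → ℝ := fun v y => k * (y v i0 : ℝ) * P y
  have hG : ∀ v y, G v y ≠ 0 → 0 ≤ y ∧ 0 ≤ y + Pi.single v Vj := fun v y h => by
    have hy : 0 ≤ y := by
      by_contra hy
      exact h (by simp only [G, hP0 y hy, mul_zero])
    refine ⟨hy, add_single_nonneg hVj_ge hy fun h0 => h ?_⟩
    simp only [G, h0, Int.cast_zero, mul_zero, zero_mul]
  let F : (V → Fin N → ℤ) → ℝ := fun x => ∑ v, (G v (x - Pi.single v Vj) - G v x)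
  calc _ = ∑' x : fiber (fun i => (nhat i : ℤ)), F x.1 := by
        rw [← tsum_natFiber_natCast]
        refine tsum_congr fun n => sum_congr rfl fun v _ => ?_
        congr 4
        · simp only [Pi.sub_apply, Pi.single_eq_same]
        · ext w i
          by_cases hw : w = v <;> simp [hw]
    _ = ∑ v, ∑' y : fiber (fun i => (nhat i : ℤ) - Vj i), G v y.1
        - ∑ v, ∑' x : fiber (fun i => (nhat i : ℤ)), G v x.1 := by
        simp only [F, sum_sub_distrib]
        rw [Summable.tsum_sub .of_finite .of_finite, Summable.tsum_finsetSum fun _ _ => .of_finite,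
          Summable.tsum_finsetSum fun _ _ => .of_finite]
        exact congrArg (· - _) (sum_congr rfl fun v _ => by
          rw [tsum_fiber_comp_sub (hG v), Fintype.sum_pi_single']; rfl)
    _ = _ := by
        simp only [G, sum_tsum_fiber_mul_coord, hPhat, tsum_natFiber]
        rfl

open Classical in
/-- For a linear (unary) reaction with single reactant species `i0`, products
`r` and net change `V_j = r - e_{i0}`, summing the per-voxel reaction terms of
the RDME (propensity `k n_{v i0}` in voxel `v`) over all configurations with
totals `n̂` gives the corresponding nonspatial CME reaction term:
`k (n̂_{i0} - V_{i0 j}) P̂(n̂ - V_j) - k n̂_{i0} P̂(n̂)`. -/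
theorem unary_reaction_marginal (V : Type) [Fintype V] [DecidableEq V]
    (N : ℕ) (i0 : Fin N) (r : Fin N → ℕ) (k : ℝ) (hk : 0 < k)
    (Vj : Fin N → ℤ) (hVj : ∀ i, Vj i = (r i : ℤ) - (if i = i0 then 1 else 0))
    (P : (V → Fin N → ℤ) → ℝ)
    (hP0 : ∀ n, (¬ ∀ v i, 0 ≤ n v i) → P n = 0)
    (Phat : (Fin N → ℤ) → ℝ)
    (hPhat : ∀ m : Fin N → ℤ, Phat m =
      ∑' n : {n : V → Fin N → ℕ // ∀ i, (∑ v, (n v i : ℤ)) = m i},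
        P (fun v i => (n.1 v i : ℤ)))
    (nhat : Fin N → ℕ) :
    ∑' n : {n : V → Fin N → ℕ // ∀ i, ∑ v, n v i = nhat i},
      ∑ v,
        (k * (((n.1 v i0 : ℤ) - Vj i0 : ℤ) : ℝ) *
            P (fun w i => (n.1 w i : ℤ) - (if w = v then Vj i else 0))
         - k * ((n.1 v i0 : ℕ) : ℝ) * P (fun w i => (n.1 w i : ℤ)))
      = k * ((((nhat i0 : ℤ) - Vj i0 : ℤ) : ℝ)) *
          Phat (fun i => (nhat i : ℤ) - Vj i)
        - k * ((nhat i0 : ℕ) : ℝ) * Phat (fun i => (nhat i : ℤ)) :=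
  unary_reaction_marginal_general V N i0 r k Vj hVj P hP0 Phat hPhat nhat
end

section
/- For a zeroth-order reaction R_j (propensity k_j ω in each voxel), summing the per-voxel reaction terms of the RDME over all configurations with totals n̂ gives k_j Ω P(n̂ - V_j,t) - k_j Ω P(n̂,t) with Ω = |V|ω: that is, ∑_{n∈S(n̂)} ∑_{v∈V} k_j ω[P(n - Ṽ_{vj},t) - P(n,t)] = k_j Ω[P(n̂ - V_j,t) - P(n̂,t)]. -/
/-!
Adding the stoichiometric vector `V_j` in voxel `v` maps `S(n̂ - V_j)` bijectively onto the
configurations `n ∈ S(n̂)` with `n ≥ Ṽ_{vj}`; for every other `n ∈ S(n̂)` the shifted configuration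
`n - Ṽ_{vj}` has a negative entry, so `P(n - Ṽ_{vj}) = 0`. Hence, for each voxel, the shifted sum
over `S(n̂)` is `P(n̂ - V_j)`, and the `|V|` voxels contribute the factor `Ω = |V| ω`.
-/

open Finset

/-- The paper's `S(m)`. The totals are integers so that `S(n̂ - V_j)` is defined (and empty)
when `n̂ - V_j` has a negative entry. -/
abbrev ConfigWithTotals (V ι : Type*) [Fintype V] (m : ι → ℤ) : Type _ :=
  {n : V → ι → ℕ // ∀ i, ∑ v, (n v i : ℤ) = m i}

variable {V ι : Type*} [Fintype V]

theorem finite_configWithTotals [Finite ι] (m : ι → ℤ) : Finite (ConfigWithTotals V ι m) := by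
  classical
  have := Fintype.ofFinite ι
  refine Set.Finite.to_subtype ((Set.finite_Iic fun _ i => (m i).toNat).subset ?_)
  intro n hn v i
  have := single_le_sum (fun w _ => Nat.cast_nonneg (α := ℤ) (n w i)) (mem_univ v)
  rw [hn i] at this
  change n v i ≤ (m i).toNat
  omega

theorem tsum_configWithTotals_comp_sub {M : Type*} [AddCommMonoid M] [TopologicalSpace M]
    (P : (V → ι → ℤ) → M) (hP : ∀ n, (¬ ∀ v i, 0 ≤ n v i) → P n = 0)
    (d : V → ι → ℕ) {m m' : ι → ℤ} (hm : ∀ i, m i = m' i + ∑ v, (d v i : ℤ)) :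
    ∑' n : ConfigWithTotals V ι m, P (fun v i => n.1 v i - d v i)
      = ∑' n : ConfigWithTotals V ι m', P (fun v i => n.1 v i) := by
  let add : ConfigWithTotals V ι m' → ConfigWithTotals V ι m := fun n =>
    ⟨n.1 + d, fun i => by simp [sum_add_distrib, n.2 i, hm i]⟩
  have hadd : add.Injective := fun a b h => Subtype.ext (add_right_cancel (congrArg Subtype.val h))
  rw [← hadd.tsum_eq]
  · simp [add]
  · intro n hn
    have hdn : d ≤ n.1 := by
      by_contra h
      exact hn (hP _ fun h' => h fun v i => by simpa using h' v i)
    refine ⟨⟨n.1 - d, fun i => ?_⟩, Subtype.ext (tsub_add_cancel_of_le hdn)⟩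
    have := n.2 i
    simp only [Pi.sub_apply, Nat.cast_sub (hdn _ _), sum_sub_distrib]
    linarith [hm i]

open Classical in
theorem zeroth_order_reaction_marginal_general (V : Type) [Fintype V] [DecidableEq V]
    (N : ℕ) (r : Fin N → ℕ) (k ω : ℝ)
    (P : (V → Fin N → ℤ) → ℝ)
    (hP0 : ∀ n, (¬ ∀ v i, 0 ≤ n v i) → P n = 0)
    (Phat : (Fin N → ℤ) → ℝ)
    (hPhat : ∀ m : Fin N → ℤ, Phat m =
      ∑' n : {n : V → Fin N → ℕ // ∀ i, (∑ v, (n v i : ℤ)) = m i},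
        P (fun v i => (n.1 v i : ℤ)))
    (nhat : Fin N → ℕ) :
    ∑' n : {n : V → Fin N → ℕ // ∀ i, ∑ v, n v i = nhat i},
      ∑ v,
        k * ω * (P (fun w i => (n.1 w i : ℤ) - (if w = v then (r i : ℤ) else 0))
                 - P (fun w i => (n.1 w i : ℤ)))
      = k * ((Fintype.card V : ℝ) * ω) *
          (Phat (fun i => (nhat i : ℤ) - (r i : ℤ))
           - Phat (fun i => (nhat i : ℤ))) := by
  have : Finite (ConfigWithTotals V (Fin N) fun i => (nhat i : ℤ)) := finite_configWithTotals _
  have hshift (v : V) : ∑' n : ConfigWithTotals V (Fin N) (fun i => (nhat i : ℤ)),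
      P (fun w i => (n.1 w i : ℤ) - (if w = v then (r i : ℤ) else 0))
        = Phat (fun i => (nhat i : ℤ) - (r i : ℤ)) := by
    rw [hPhat]
    convert tsum_configWithTotals_comp_sub P hP0 (fun w i => if w = v then r i else 0) _ using 4
    · simp only [Nat.cast_ite, Nat.cast_zero]
    · intro i
      simp only [Nat.cast_ite, Nat.cast_zero, sum_ite_eq', mem_univ, if_true, sub_add_cancel]
  let e : {n : V → Fin N → ℕ // ∀ i, ∑ v, n v i = nhat i} ≃
      ConfigWithTotals V (Fin N) (fun i => (nhat i : ℤ)) :=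
    Equiv.subtypeEquivRight fun n => by simp only [← Nat.cast_sum, Nat.cast_inj]
  rw [← e.symm.tsum_eq, Summable.tsum_finsetSum fun _ _ => .of_finite]
  simp only [e, Equiv.subtypeEquivRight_symm_apply_coe, tsum_mul_left,
    Summable.tsum_sub .of_finite .of_finite, hshift]
  rw [hPhat (fun i => (nhat i : ℤ)), sum_const, card_univ, nsmul_eq_mul]
  ring

open Classical in
/-- For a zeroth-order reaction with products `r` (net change `V_j = r`,
propensity `k ω` in each voxel), summing the per-voxel reaction terms of the
RDME over all configurations with totals `n̂` gives
`k Ω (P̂(n̂ - V_j) - P̂(n̂))` with `Ω = |V| ω`. -/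
theorem zeroth_order_reaction_marginal (V : Type) [Fintype V] [DecidableEq V]
    (N : ℕ) (r : Fin N → ℕ) (k ω : ℝ) (hk : 0 < k) (hω : 0 < ω)
    (P : (V → Fin N → ℤ) → ℝ)
    (hP0 : ∀ n, (¬ ∀ v i, 0 ≤ n v i) → P n = 0)
    (Phat : (Fin N → ℤ) → ℝ)
    (hPhat : ∀ m : Fin N → ℤ, Phat m =
      ∑' n : {n : V → Fin N → ℕ // ∀ i, (∑ v, (n v i : ℤ)) = m i},
        P (fun v i => (n.1 v i : ℤ)))
    (nhat : Fin N → ℕ) :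
    ∑' n : {n : V → Fin N → ℕ // ∀ i, ∑ v, n v i = nhat i},
      ∑ v,
        k * ω * (P (fun w i => (n.1 w i : ℤ) - (if w = v then (r i : ℤ) else 0))
                 - P (fun w i => (n.1 w i : ℤ)))
      = k * ((Fintype.card V : ℝ) * ω) *
          (Phat (fun i => (nhat i : ℤ) - (r i : ℤ))
           - Phat (fun i => (nhat i : ℤ))) :=
  zeroth_order_reaction_marginal_general V N r k ω P hP0 Phat hPhat nhat
end

section
/- If a mass-action network has a stationary distribution of product-of-Poissonians form π(n) ∝ ∏_i (Ω c_i)^{n_i}/n_i! on the full state space ℕ^N (with c ∈ ℝ_{>0}^N), then the network is complex balanced at c. Combined with the converse (Anderson–Craciun–Kurtz), the product-form Poisson stationary distribution on ℕ^N exists if and only if the network is complex balanced. -/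
/-!
Substituting the Poisson form, reaction `j` contributes `Ω k_j c^{s_j} · Q_{r_j}(n)` to the
inflow into `n` and `Ω k_j c^{s_j} · Q_{s_j}(n)` to the outflow, where
`Q_y(n) = ∏ᵢ (Ω cᵢ)^{nᵢ - yᵢ} / (nᵢ - yᵢ)!` for `n ≥ y` and `Q_y(n) = 0` otherwise. Stationarity
thus says that `∑_y (inflow_y - outflow_y) Q_y` vanishes identically on `ℕ^N`. Since `Q_y(y) = 1`
and `Q_y` is supported on `{n ≥ y}`, the family `(Q_y)` is triangular for the componentwise order,
hence linearly independent, and every coefficient `inflow_y - outflow_y` must vanish.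
-/

open Finset Nat

theorem linearIndependent_of_apply_self_ne_zero {α R : Type*} [PartialOrder α] [Ring R]
    [NoZeroDivisors R] (v : α → α → R) (hv_self : ∀ a, v a a ≠ 0)
    (hv_le : ∀ a b, v a b ≠ 0 → a ≤ b) : LinearIndependent R v := by
  classical
  refine linearIndependent_iff'.2 fun s g hsum => ?_
  by_contra! hne
  obtain ⟨a, ha_mem, ha_min⟩ := (s.filter (g · ≠ 0)).exists_minimal
    (by obtain ⟨i, hi, hgi⟩ := hne; exact ⟨i, mem_filter.2 ⟨hi, hgi⟩⟩)
  obtain ⟨ha_s, hga⟩ := mem_filter.1 ha_mem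
  have heval : ∑ i ∈ s, g i * v i a = 0 := by
    simpa using congr_fun hsum a
  rw [sum_eq_single_of_mem a ha_s fun i hi hia => ?_] at heval
  · exact mul_ne_zero hga (hv_self a) heval
  by_contra hgv
  have hia_le : i ≤ a := hv_le i a (right_ne_zero_of_mul hgv)
  exact hia (le_antisymm hia_le (ha_min (mem_filter.2 ⟨hi, left_ne_zero_of_mul hgv⟩) hia_le))

theorem LinearIndependent.sum_smul_sub_eq_zero_iff {ι α R M : Type*} [Fintype ι] [DecidableEq α]
    [Ring R] [AddCommGroup M] [Module R M] {v : α → M} (hv : LinearIndependent R v)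
    (a b : ι → α) (w : ι → R) :
    ∑ j, w j • (v (a j) - v (b j)) = 0 ↔
      ∀ y, ∑ j ∈ univ.filter (a · = y), w j = ∑ j ∈ univ.filter (b · = y), w j := by
  set l : α →₀ R := ∑ j, (Finsupp.single (a j) (w j) - Finsupp.single (b j) (w j))
  have hl : Finsupp.linearCombination R v l = ∑ j, w j • (v (a j) - v (b j)) := by
    simp [l, smul_sub]
  have hl_apply : ∀ y,
      l y = ∑ j ∈ univ.filter (a · = y), w j - ∑ j ∈ univ.filter (b · = y), w j := fun y => by
    simp [l, Finsupp.single_apply, sum_filter]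
  rw [← hl, LinearMap.map_eq_zero_iff _ hv, Finsupp.ext_iff]
  simp only [hl_apply, Finsupp.coe_zero, Pi.zero_apply, sub_eq_zero]

noncomputable def poissonShift (x : ℝ) (y n : ℕ) : ℝ :=
  if y ≤ n then x ^ (n - y) / (n - y)! else 0

theorem descFactorial_mul_pow_div_factorial (x : ℝ) (a b : ℕ) :
    (a.descFactorial b : ℝ) * (x ^ a / a !) = x ^ b * poissonShift x b a := by
  unfold poissonShift
  split_ifs with hba
  · have hfac := congrArg (Nat.cast (R := ℝ)) (factorial_mul_descFactorial hba)
    push_cast at hfac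
    rw [← hfac, ← pow_mul_pow_sub x hba]
    have : (a.descFactorial b : ℝ) ≠ 0 := by
      exact_mod_cast descFactorial_eq_zero_iff_lt.not.2 (not_lt.2 hba)
    field_simp
  · rw [descFactorial_eq_zero_iff_lt.2 (by omega)]
    simp

theorem poissonShift_congr (x : ℝ) {a b t u : ℕ} (h : a + u = t + b) :
    poissonShift x b a = poissonShift x u t := by
  unfold poissonShift
  split_ifs <;> first | omega | rfl | rw [show a - b = t - u by omega]

section Poisson

variable {ι : Type*} [Fintype ι]

noncomputable def poissonShiftPi (x : ι → ℝ) (y n : ι → ℕ) : ℝ :=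
  ∏ i, poissonShift (x i) (y i) (n i)

theorem poissonShiftPi_self (x : ι → ℝ) (y : ι → ℕ) :
    poissonShiftPi x y y = 1 := by
  simp [poissonShiftPi, poissonShift]

theorem le_of_poissonShiftPi_ne_zero (x : ι → ℝ) {y n : ι → ℕ}
    (h : poissonShiftPi x y n ≠ 0) : y ≤ n := fun i => by
  by_contra hi
  exact h (prod_eq_zero (mem_univ i) (if_neg hi))

theorem linearIndependent_poissonShiftPi (x : ι → ℝ) :
    LinearIndependent ℝ (poissonShiftPi x) :=
  linearIndependent_of_apply_self_ne_zero _ (fun y => by simp [poissonShiftPi_self])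
    fun _ _ => le_of_poissonShiftPi_ne_zero x

noncomputable def massActionPropensity (k Ω : ℝ) (s : ι → ℕ) (n : ι → ℤ) : ℝ :=
  if ∀ i, 0 ≤ n i then
    k * Ω ^ ((1 : ℤ) - ∑ i, (s i : ℤ)) * ∏ i, ((n i).toNat.descFactorial (s i) : ℝ)
  else 0

noncomputable def poissonProductWeight (x : ι → ℝ) (n : ι → ℤ) : ℝ :=
  if ∀ i, 0 ≤ n i then ∏ i, x i ^ (n i).toNat / ((n i).toNat ! : ℝ) else 0

theorem zpow_one_sub_natCast_sum_mul_pow_sum {Ω : ℝ} (hΩ : Ω ≠ 0) (s : ι → ℕ) :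
    Ω ^ ((1 : ℤ) - ∑ i, (s i : ℤ)) * Ω ^ (∑ i, s i) = Ω := by
  rw [← zpow_natCast, ← zpow_add₀ hΩ]
  push_cast
  simp

theorem massActionPropensity_mul_poissonProductWeight (k : ℝ) {Ω : ℝ} (hΩ : Ω ≠ 0)
    (c : ι → ℝ) (s u n : ι → ℕ) (m : ι → ℤ) (hm : ∀ i, m i + u i = n i + s i) :
    massActionPropensity k Ω s m * poissonProductWeight (fun i => Ω * c i) m =
      (k * ∏ i, c i ^ s i) * (Ω * poissonShiftPi (fun i => Ω * c i) u n) := by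
  by_cases hm_nonneg : ∀ i, 0 ≤ m i
  · have hshift : ∀ i, poissonShift (Ω * c i) (s i) (m i).toNat =
        poissonShift (Ω * c i) (u i) (n i) := fun i =>
      poissonShift_congr _ (by have := hm i; have := hm_nonneg i; omega)
    have hprod : (∏ i, ((m i).toNat.descFactorial (s i) : ℝ)) *
        ∏ i, (Ω * c i) ^ (m i).toNat / ((m i).toNat ! : ℝ) =
        Ω ^ (∑ i, s i) * (∏ i, c i ^ s i) * poissonShiftPi (fun i => Ω * c i) u n := by
      rw [poissonShiftPi, ← prod_pow_eq_pow_sum, ← prod_mul_distrib, ← prod_mul_distrib,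
        ← prod_mul_distrib]
      refine prod_congr rfl fun i _ => ?_
      rw [descFactorial_mul_pow_div_factorial, hshift, mul_pow]
    simp only [massActionPropensity, poissonProductWeight, if_pos hm_nonneg]
    rw [mul_assoc, hprod]
    linear_combination (k * (∏ i, c i ^ s i) * poissonShiftPi (fun i => Ω * c i) u n) *
      zpow_one_sub_natCast_sum_mul_pow_sum hΩ s
  · obtain ⟨i, hi⟩ := not_forall.1 hm_nonneg
    have hQ : poissonShiftPi (fun i => Ω * c i) u n = 0 :=
      prod_eq_zero (mem_univ i) (if_neg (by have := hm i; omega))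
    simp [massActionPropensity, hm_nonneg, hQ]

theorem sum_netFlux_eq_smul_sum_poissonShiftPi {κ : Type*} [Fintype κ] (k : κ → ℝ) {Ω : ℝ}
    (hΩ : Ω ≠ 0) (c : ι → ℝ) (s r : κ → ι → ℕ) (n : ι → ℕ) :
    ∑ j, (massActionPropensity (k j) Ω (s j) (fun i => n i - ((r j i : ℤ) - (s j i : ℤ))) *
          poissonProductWeight (fun i => Ω * c i) (fun i => n i - ((r j i : ℤ) - (s j i : ℤ)))
        - massActionPropensity (k j) Ω (s j) (fun i => n i) *
          poissonProductWeight (fun i => Ω * c i) (fun i => n i)) =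
      (Ω • ∑ j, (k j * ∏ i, c i ^ s j i) •
        (poissonShiftPi (fun i => Ω * c i) (r j) - poissonShiftPi (fun i => Ω * c i) (s j))) n := by
  rw [Pi.smul_apply, Finset.sum_apply, smul_eq_mul, mul_sum]
  refine sum_congr rfl fun j _ => ?_
  rw [massActionPropensity_mul_poissonProductWeight _ hΩ c (s j) (r j) n _ fun i => by ring,
    massActionPropensity_mul_poissonProductWeight _ hΩ c (s j) (s j) n _ fun i => rfl]
  simp only [Pi.smul_apply, Pi.sub_apply, smul_eq_mul]
  ring

end Poisson

theorem forall_nonneg_int_iff_forall_nat {ι : Type*} {P : (ι → ℤ) → Prop} :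
    (∀ n : ι → ℤ, (∀ i, 0 ≤ n i) → P n) ↔ ∀ m : ι → ℕ, P (fun i => m i) :=
  ⟨fun h m => h _ fun i => Int.natCast_nonneg _, fun h n hn => by
    simpa [Int.toNat_of_nonneg (hn _)] using h fun i => (n i).toNat⟩

open Classical in
theorem poisson_stationary_iff_complex_balanced_general (N K : ℕ)
    (s r : Fin K → Fin N → ℕ) (k : Fin K → ℝ)
    (c : Fin N → ℝ) (Ω : ℝ) (hΩ : 0 < Ω)
    -- mass-action propensity (zero when some n_i < s_{ij} or n has a negative entry):
    (f : Fin K → (Fin N → ℤ) → ℝ)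
    (hf : ∀ j n, f j n =
      if ∀ i, 0 ≤ n i then
        k j * Ω ^ ((1 : ℤ) - ∑ i, (s j i : ℤ)) *
          ∏ i, (Nat.descFactorial (n i).toNat (s j i) : ℝ)
      else 0)
    -- the product-of-Poissonians weight:
    (π : (Fin N → ℤ) → ℝ)
    (hπ : ∀ n, π n =
      if ∀ i, 0 ≤ n i then
        ∏ i, (Ω * c i) ^ (n i).toNat / (Nat.factorial (n i).toNat : ℝ)
      else 0) :
    -- stationarity of π on all of ℕ^N  ↔  complex balance at c
    (∀ n : Fin N → ℤ, (∀ i, 0 ≤ n i) →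
      ∑ j, (f j (fun i => n i - ((r j i : ℤ) - (s j i : ℤ))) *
              π (fun i => n i - ((r j i : ℤ) - (s j i : ℤ)))
            - f j n * π n) = 0)
    ↔ (∀ y : Fin N → ℕ,
      ∑ j ∈ Finset.univ.filter (fun j => r j = y), k j * ∏ i, c i ^ (s j i)
        = ∑ j ∈ Finset.univ.filter (fun j => s j = y), k j * ∏ i, c i ^ (s j i)) := by
  -- `congr` identifies the `Decidable` instances `Nat.decidableForallFin` (statement) and
  -- `Fintype.decidableForallFintype` (definitions).
  obtain rfl : f = fun j => massActionPropensity (k j) Ω (s j) := funext fun j => funext fun n => by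
    rw [hf, massActionPropensity]; congr
  obtain rfl : π = poissonProductWeight (fun i => Ω * c i) := funext fun n => by
    rw [hπ, poissonProductWeight]; congr
  set Q := poissonShiftPi (fun i => Ω * c i)
  set w : Fin K → ℝ := fun j => k j * ∏ i, c i ^ s j i
  calc _ ↔ ∀ n : Fin N → ℕ, (Ω • ∑ j, w j • (Q (r j) - Q (s j))) n = 0 := by
        rw [forall_nonneg_int_iff_forall_nat]
        simp only [sum_netFlux_eq_smul_sum_poissonShiftPi k hΩ.ne' c s r]
        rfl
    _ ↔ ∑ j, w j • (Q (r j) - Q (s j)) = 0 := by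
        rw [← smul_eq_zero_iff_right hΩ.ne', funext_iff]
        rfl
    _ ↔ _ := (linearIndependent_poissonShiftPi _).sum_smul_sub_eq_zero_iff r s w

open Classical in
/-- The mass-action network has the product-of-Poissonians stationary
distribution `π(n) ∝ ∏_i (Ω c_i)^{n_i}/n_i!` on the full state space `ℕ^N`
if and only if it is complex balanced at `c` (total inflow equals total
outflow at every complex); the "if" direction is the
Anderson–Craciun–Kurtz theorem. -/
theorem poisson_stationary_iff_complex_balanced (N K : ℕ)
    (s r : Fin K → Fin N → ℕ) (k : Fin K → ℝ) (hk : ∀ j, 0 < k j)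
    (c : Fin N → ℝ) (hc : ∀ i, 0 < c i) (Ω : ℝ) (hΩ : 0 < Ω)
    -- mass-action propensity (zero when some n_i < s_{ij} or n has a negative entry):
    (f : Fin K → (Fin N → ℤ) → ℝ)
    (hf : ∀ j n, f j n =
      if ∀ i, 0 ≤ n i then
        k j * Ω ^ ((1 : ℤ) - ∑ i, (s j i : ℤ)) *
          ∏ i, (Nat.descFactorial (n i).toNat (s j i) : ℝ)
      else 0)
    -- the product-of-Poissonians weight:
    (π : (Fin N → ℤ) → ℝ)
    (hπ : ∀ n, π n =
      if ∀ i, 0 ≤ n i then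
        ∏ i, (Ω * c i) ^ (n i).toNat / (Nat.factorial (n i).toNat : ℝ)
      else 0) :
    -- stationarity of π on all of ℕ^N  ↔  complex balance at c
    (∀ n : Fin N → ℤ, (∀ i, 0 ≤ n i) →
      ∑ j, (f j (fun i => n i - ((r j i : ℤ) - (s j i : ℤ))) *
              π (fun i => n i - ((r j i : ℤ) - (s j i : ℤ)))
            - f j n * π n) = 0)
    ↔ (∀ y : Fin N → ℕ,
      ∑ j ∈ Finset.univ.filter (fun j => r j = y), k j * ∏ i, c i ^ (s j i)
        = ∑ j ∈ Finset.univ.filter (fun j => s j = y), k j * ∏ i, c i ^ (s j i)) :=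
  poisson_stationary_iff_complex_balanced_general N K s r k c Ω hΩ f hf π hπ
end

section
/- For the mass-action propensity with Poisson weights: f_j(n,ω)·π*(n) summed appropriately satisfies, for a reaction from complex C_i to complex C_{i'}, f_j(n - V_j, ω)π*(n - V_j) = (ω a_{ii'} Ψ_i(c)/Ψ_{i'}(c)) · ∏_k ω^{n_k - y_{ki'}} c_k^{n_k}/(n_k - y_{ki'})!, where π*(n) = ∏_k (ω c_k)^{n_k}/n_k! and V_j = y_{·i'} - y_{·i}. Hence the net stationarity sum over all reactions can be regrouped by target complex, yielding ω ∑_{C_{i'}} [Ψ_{i'}(c)]^{-1} ∏_k ω^{n_k-y_{ki'}}c_k^{n_k}/(n_k-y_{ki'})! · (∑_{C_i→C_{i'}} a_{ii'}Ψ_i(c) - ∑_{C_{i'}→C_i} a_{i'i}Ψ_{i'}(c)). -/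
/-! Per species, the Poisson factor turns the falling factorial of the propensity into a shift:
`(k)_r · x^k / k! = x^r · x^(k-r) / (k-r)!`, with `1/m! = 0` for `m < 0` absorbing the states
where the reaction cannot fire. So the gain term of `C_i → C_{i'}` at `n` equals `ω a_{ii'} Ψ_i(c)`
times a weight at `n - y_{i'}` that depends only on the target complex, and the loss term is the
same expression with `i'` replaced by `i`. Exchanging the order of summation in the losses then
groups everything by the complex `i'`. -/

open Finset

noncomputable def intInvFactorial (m : ℤ) : ℝ :=
  if 0 ≤ m then 1 / (m.toNat.factorial : ℝ) else 0

noncomputable def poissonTerm (x : ℝ) (m : ℤ) : ℝ :=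
  x ^ m * intInvFactorial m

theorem intInvFactorial_natCast (k : ℕ) : intInvFactorial k = 1 / (k.factorial : ℝ) := by
  simp [intInvFactorial]

theorem poissonTerm_of_neg (x : ℝ) {m : ℤ} (hm : m < 0) : poissonTerm x m = 0 := by
  simp [poissonTerm, intInvFactorial, hm.not_ge]

theorem descFactorial_mul_pow_div_factorial_s15 (x : ℝ) (k r : ℕ) :
    (k.descFactorial r : ℝ) * (x ^ k / k.factorial) = x ^ r * poissonTerm x (k - r) := by
  rcases le_or_gt r k with hrk | hkr
  · have hfact : ((k - r).factorial : ℝ) * k.descFactorial r = k.factorial := by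
      exact_mod_cast Nat.factorial_mul_descFactorial hrk
    rw [poissonTerm, ← Nat.cast_sub hrk, zpow_natCast, intInvFactorial_natCast, ← hfact,
      ← pow_sub_mul_pow x hrk]
    have hfact_ne : ((k - r).factorial : ℝ) ≠ 0 := by positivity
    have hdesc_ne : (k.descFactorial r : ℝ) ≠ 0 := by
      exact_mod_cast (Nat.descFactorial_pos.mpr hrk).ne'
    field_simp
  · rw [Nat.descFactorial_of_lt hkr, poissonTerm_of_neg x (by omega)]
    simp

theorem zpow_one_sub_natCast_mul_pow {G₀ : Type*} [GroupWithZero G₀] {a : G₀} (ha : a ≠ 0)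
    (s : ℕ) : a ^ (1 - s : ℤ) * a ^ s = a := by
  rw [zpow_one_sub_natCast₀ ha, div_mul_cancel₀ _ (pow_ne_zero s ha)]

theorem massAction_mul_poisson {σ : Type*} [Fintype σ] {ω : ℝ} (hω : ω ≠ 0) (k : ℝ)
    (c : σ → ℝ) (r : σ → ℕ) (m : σ → ℤ) [Decidable (∀ l, 0 ≤ m l)] :
    (if ∀ l, 0 ≤ m l then
        k * ω ^ ((1 : ℤ) - ∑ l, (r l : ℤ)) * ∏ l, ((m l).toNat.descFactorial (r l) : ℝ)
      else 0) *
      (if ∀ l, 0 ≤ m l then ∏ l, (ω * c l) ^ (m l).toNat / ((m l).toNat.factorial : ℝ)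
      else 0)
      = ω * k * (∏ l, c l ^ r l) * ∏ l, poissonTerm (ω * c l) (m l - r l) := by
  split_ifs with hm
  · have hterm : ∀ l, ((m l).toNat.descFactorial (r l) : ℝ) *
        ((ω * c l) ^ (m l).toNat / ((m l).toNat.factorial : ℝ))
        = ω ^ r l * c l ^ r l * poissonTerm (ω * c l) (m l - r l) := by
      intro l
      rw [descFactorial_mul_pow_div_factorial_s15, Int.toNat_of_nonneg (hm l), mul_pow]
    rw [mul_assoc, ← prod_mul_distrib, prod_congr rfl fun l _ => hterm l, prod_mul_distrib,
      prod_mul_distrib, prod_pow_eq_pow_sum]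
    have hω_sum := zpow_one_sub_natCast_mul_pow hω (∑ l, r l)
    push_cast at hω_sum
    linear_combination (k * (∏ l, c l ^ r l) * ∏ l, poissonTerm (ω * c l) (m l - r l)) * hω_sum
  · obtain ⟨l, hl⟩ := not_forall.mp hm
    have hzero : ∏ l, poissonTerm (ω * c l) (m l - r l) = 0 :=
      prod_eq_zero (mem_univ l) (poissonTerm_of_neg _ (by omega))
    rw [hzero, mul_zero, mul_zero]

theorem pow_sub_mul_pow_toNat_mul_intInvFactorial (ω c : ℝ) (n : ℤ) (s : ℕ) :
    ω ^ (n - s) * c ^ n.toNat * intInvFactorial (n - s) = c ^ s * poissonTerm (ω * c) (n - s) := by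
  rcases lt_or_ge (n - s) 0 with hneg | hnonneg
  · rw [poissonTerm_of_neg _ hneg, intInvFactorial, if_neg hneg.not_ge]
    ring
  · obtain ⟨t, ht⟩ := Int.eq_ofNat_of_zero_le hnonneg
    have hn : n.toNat = s + t := by omega
    rw [poissonTerm, ht, hn, zpow_natCast, zpow_natCast, mul_pow, pow_add]
    ring

theorem sum_sum_sub_eq_sum_mul_sub_sum {ι R : Type*} [Fintype ι] [CommRing R]
    (a : ι → ι → R) (P H : ι → R) :
    ∑ i, ∑ i', a i i' * P i * (H i' - H i)
      = ∑ i', H i' * (∑ i, a i i' * P i - ∑ i, a i' i * P i') := by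
  simp only [mul_sub, sum_sub_distrib, mul_sum]
  rw [sum_comm]
  congr 1
  · exact sum_congr rfl fun _ _ => sum_congr rfl fun _ _ => by ring
  · exact sum_congr rfl fun _ _ => sum_congr rfl fun _ _ => by ring

open Classical in
theorem ack_regrouping_identity_general (N : ℕ) (ι : Type) [Fintype ι]
    (y : ι → Fin N → ℕ) (a : ι → ι → ℝ)
    (c : Fin N → ℝ) (hc : ∀ l, 0 < c l) (ω : ℝ) (hω : 0 < ω)
    -- extended inverse factorial: 1/m! for m ≥ 0, zero for m < 0
    (invf : ℤ → ℝ)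
    (hinvf : ∀ m : ℤ, invf m = if 0 ≤ m then 1 / (Nat.factorial m.toNat : ℝ) else 0)
    -- mass-action propensity of reaction C_i → C_{i'} (zero off ℕ^N):
    (fp : ι → ι → (Fin N → ℤ) → ℝ)
    (hfp : ∀ i i' m, fp i i' m =
      if ∀ l, 0 ≤ m l then
        a i i' * ω ^ ((1 : ℤ) - ∑ l, (y i l : ℤ)) *
          ∏ l, (Nat.descFactorial (m l).toNat (y i l) : ℝ)
      else 0)
    -- Poisson weight:
    (πs : (Fin N → ℤ) → ℝ)
    (hπs : ∀ m, πs m =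
      if ∀ l, 0 ≤ m l then
        ∏ l, (ω * c l) ^ (m l).toNat / (Nat.factorial (m l).toNat : ℝ)
      else 0)
    (n : Fin N → ℤ) :
    -- (a) the per-reaction gain-term identity
    (∀ i i',
      fp i i' (fun l => n l - ((y i' l : ℤ) - (y i l : ℤ))) *
          πs (fun l => n l - ((y i' l : ℤ) - (y i l : ℤ)))
        = ω * a i i' * ((∏ l, c l ^ (y i l)) / (∏ l, c l ^ (y i' l))) *
            ∏ l, ω ^ (n l - (y i' l : ℤ)) * c l ^ (n l).toNat *
              invf (n l - (y i' l : ℤ)))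
    ∧
    -- (b) the net stationarity sum regrouped by target complex
    (∑ i, ∑ i',
        (fp i i' (fun l => n l - ((y i' l : ℤ) - (y i l : ℤ))) *
            πs (fun l => n l - ((y i' l : ℤ) - (y i l : ℤ)))
          - fp i i' n * πs n)
      = ω * ∑ i', (∏ l, c l ^ (y i' l))⁻¹ *
          (∏ l, ω ^ (n l - (y i' l : ℤ)) * c l ^ (n l).toNat *
            invf (n l - (y i' l : ℤ))) *
          ((∑ i, a i i' * ∏ l, c l ^ (y i l))
            - (∑ i, a i' i * ∏ l, c l ^ (y i' l)))) := by
  obtain rfl : invf = intInvFactorial := funext hinvf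
  set Ψ : ι → ℝ := fun j => ∏ l, c l ^ y j l
  set H : ι → ℝ := fun j => ∏ l, poissonTerm (ω * c l) (n l - y j l)
  have hΨ : ∀ j, Ψ j ≠ 0 := fun j => prod_ne_zero_iff.mpr fun l _ => pow_ne_zero _ (hc l).ne'
  have hweight : ∀ j, ∏ l, ω ^ (n l - y j l) * c l ^ (n l).toNat * intInvFactorial (n l - y j l)
      = Ψ j * H j := fun j => by
    simp only [pow_sub_mul_pow_toNat_mul_intInvFactorial, prod_mul_distrib, Ψ, H]
  have hflux : ∀ i i' m, fp i i' m * πs m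
      = ω * a i i' * Ψ i * ∏ l, poissonTerm (ω * c l) (m l - y i l) := fun i i' m => by
    rw [hfp, hπs]
    exact massAction_mul_poisson hω.ne' _ c (y i) m
  have hgain : ∀ i i', fp i i' (fun l => n l - ((y i' l : ℤ) - (y i l : ℤ))) *
      πs (fun l => n l - ((y i' l : ℤ) - (y i l : ℤ))) = ω * (a i i' * Ψ i * H i') := by
    intro i i'
    have hshift : ∀ l, n l - ((y i' l : ℤ) - y i l) - y i l = n l - y i' l := fun l => by ring
    simp only [hflux, hshift]
    ring
  have hloss : ∀ i i', fp i i' n * πs n = ω * (a i i' * Ψ i * H i) := fun i i' => by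
    rw [hflux]
    ring
  refine ⟨fun i i' => ?_, ?_⟩
  · show _ = ω * a i i' * (Ψ i / Ψ i') * _
    rw [hgain, hweight]
    field_simp [hΨ i']
  · show _ = ω * ∑ i', (Ψ i')⁻¹ * _ * (∑ i, a i i' * Ψ i - ∑ i, a i' i * Ψ i')
    simp only [hgain, hloss, hweight, ← mul_sub, ← mul_sum, inv_mul_cancel_left₀ (hΨ _)]
    rw [sum_sum_sub_eq_sum_mul_sub_sum]

open Classical in
/-- Core regrouping computation for the Anderson–Craciun–Kurtz theorem.
For reactions `C_i → C_{i'}` with rates `a_{ii'}` and Poisson weight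
`π*(n) = ∏_k (ω c_k)^{n_k}/n_k!`:
(a) each gain term satisfies
`f_{ii'}(n - V)π*(n - V) = ω a_{ii'} (Ψ_i(c)/Ψ_{i'}(c)) ∏_k ω^{n_k - y_{ki'}} c_k^{n_k}/(n_k - y_{ki'})!`,
and (b) the net stationarity sum regroups by target complex as
`ω ∑_{i'} Ψ_{i'}(c)⁻¹ ∏_k ω^{n_k-y_{ki'}}c_k^{n_k}/(n_k-y_{ki'})! ·
  (∑_i a_{ii'}Ψ_i(c) - ∑_i a_{i'i}Ψ_{i'}(c))`,
with the convention that `1/m! = 0` for `m < 0`. -/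
theorem ack_regrouping_identity (N : ℕ) (ι : Type) [Fintype ι]
    (y : ι → Fin N → ℕ) (a : ι → ι → ℝ) (ha : ∀ i i', 0 ≤ a i i')
    (c : Fin N → ℝ) (hc : ∀ l, 0 < c l) (ω : ℝ) (hω : 0 < ω)
    -- extended inverse factorial: 1/m! for m ≥ 0, zero for m < 0
    (invf : ℤ → ℝ)
    (hinvf : ∀ m : ℤ, invf m = if 0 ≤ m then 1 / (Nat.factorial m.toNat : ℝ) else 0)
    -- mass-action propensity of reaction C_i → C_{i'} (zero off ℕ^N):
    (fp : ι → ι → (Fin N → ℤ) → ℝ)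
    (hfp : ∀ i i' m, fp i i' m =
      if ∀ l, 0 ≤ m l then
        a i i' * ω ^ ((1 : ℤ) - ∑ l, (y i l : ℤ)) *
          ∏ l, (Nat.descFactorial (m l).toNat (y i l) : ℝ)
      else 0)
    -- Poisson weight:
    (πs : (Fin N → ℤ) → ℝ)
    (hπs : ∀ m, πs m =
      if ∀ l, 0 ≤ m l then
        ∏ l, (ω * c l) ^ (m l).toNat / (Nat.factorial (m l).toNat : ℝ)
      else 0)
    (n : Fin N → ℤ) (hn : ∀ l, 0 ≤ n l) :
    -- (a) the per-reaction gain-term identity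
    (∀ i i',
      fp i i' (fun l => n l - ((y i' l : ℤ) - (y i l : ℤ))) *
          πs (fun l => n l - ((y i' l : ℤ) - (y i l : ℤ)))
        = ω * a i i' * ((∏ l, c l ^ (y i l)) / (∏ l, c l ^ (y i' l))) *
            ∏ l, ω ^ (n l - (y i' l : ℤ)) * c l ^ (n l).toNat *
              invf (n l - (y i' l : ℤ)))
    ∧
    -- (b) the net stationarity sum regrouped by target complex
    (∑ i, ∑ i',
        (fp i i' (fun l => n l - ((y i' l : ℤ) - (y i l : ℤ))) *
            πs (fun l => n l - ((y i' l : ℤ) - (y i l : ℤ)))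
          - fp i i' n * πs n)
      = ω * ∑ i', (∏ l, c l ^ (y i' l))⁻¹ *
          (∏ l, ω ^ (n l - (y i' l : ℤ)) * c l ^ (n l).toNat *
            invf (n l - (y i' l : ℤ))) *
          ((∑ i, a i i' * ∏ l, c l ^ (y i l))
            - (∑ i, a i' i * ∏ l, c l ^ (y i' l)))) :=
  ack_regrouping_identity_general N ι y a c hc ω hω invf hinvf fp hfp πs hπs n
end
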